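/- One-dimensional Gaussian mechanism: let ε ∈ (0, 1], δ ∈ (0, 1), α > 0, and let μ₁, μ₂ ∈ ℝ with |μ₁ − μ₂| ≤ α. If σ ≥ α · √(2 · log(1.25/δ)) / ε, then for every measurable set S ⊆ ℝ, the Gaussian measures satisfy N(μ₁, σ²)(S) ≤ e^ε · N(μ₂, σ²)(S) + δ and N(μ₂, σ²)(S) ≤ e^ε · N(μ₁, σ²)(S) + δ. -/

import Mathlib

/-!
Write `c = μ₁ - μ₂`. The log density ratio of `N(μ₁, σ²)` to `N(μ₂, σ²)` (the privacy loss) is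
affine in `x`, so under `N(μ₁, σ²)` it is Gaussian with mean `c² / 2σ²` and standard deviation
`|c| / σ`. Off the set `G` where it exceeds `ε` the densities differ by at most the factor `e^ε`,
and the mass of `G` is the standard normal tail at `εσ/|c| - |c|/2σ ≥ β - 1/2β`, where
`β = √(2 log (1.25/δ))`. The Mills ratio bound `P(Z > s) ≤ φ(s)/s` together with
`exp (-(β - 1/2β)²/2) ≤ e^{1/2} e^{-β²/2} = e^{1/2} δ / 1.25` makes this tail at most `δ`.
-/

open MeasureTheory ProbabilityTheory Set Real Filter
open scoped ENNReal NNReal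

namespace MeasureTheory

theorem measure_le_mul_add_of_restrict_le {α : Type*} [MeasurableSpace α] {μ ν : Measure α}
    {G : Set α} {c d : ℝ≥0∞} (hG : MeasurableSet G) (hgood : μ.restrict G ≤ c • ν)
    (hbad : μ Gᶜ ≤ d) (S : Set α) : μ S ≤ c * ν S + d :=
  calc μ S ≤ μ (S ∩ G) + μ (S \ G) := measure_le_inter_add_sdiff μ S G
    _ ≤ μ.restrict G S + μ Gᶜ := by
      rw [Measure.restrict_apply' hG]
      gcongr
      exact sdiff_subset_compl S G
    _ ≤ c * ν S + d := add_le_add (hgood S) hbad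

theorem withDensity_restrict_le_smul_withDensity {α : Type*} [MeasurableSpace α] {μ : Measure α}
    {f g : α → ℝ≥0∞} {G : Set α} {c : ℝ≥0∞} (hG : MeasurableSet G) (hc : c ≠ ∞)
    (hfg : ∀ x ∈ G, f x ≤ c * g x) : (μ.withDensity f).restrict G ≤ c • μ.withDensity g := by
  rw [restrict_withDensity hG, ← withDensity_indicator hG, ← withDensity_smul' c g hc]
  exact withDensity_mono (ae_of_all _ fun x ↦ indicator_apply_le' (hfg x) fun _ ↦ zero_le)

end MeasureTheory

namespace ProbabilityTheory

theorem gaussianReal_le_mul_volume (μ : ℝ) {v : ℝ≥0} (hv : v ≠ 0) (A : Set ℝ) :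
    gaussianReal μ v A ≤ ENNReal.ofReal (√(2 * π * v))⁻¹ * volume A := by
  rw [gaussianReal_apply μ hv, ← setLIntegral_const]
  refine lintegral_mono fun x ↦ ENNReal.ofReal_le_ofReal ?_
  refine mul_le_of_le_one_right (by positivity) (exp_le_one_iff.mpr ?_)
  exact div_nonpos_of_nonpos_of_nonneg (neg_nonpos.mpr (sq_nonneg _)) (by positivity)

theorem gaussianReal_Ioi_self (μ : ℝ) {v : ℝ≥0} (hv : v ≠ 0) :
    gaussianReal μ v (Ioi μ) = 2⁻¹ := by
  have := nullSingletonClass_gaussianReal (μ := μ) hv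
  have hsymm : gaussianReal μ v (Iio μ) = gaussianReal μ v (Ioi μ) := by
    have hmap : (gaussianReal μ v).map (2 * μ - ·) = gaussianReal μ v := by
      rw [gaussianReal_map_const_sub]
      ring_nf
    conv_lhs => rw [← hmap]
    rw [Measure.map_apply (by fun_prop) measurableSet_Iio]
    congr 1
    ext x
    simp only [mem_preimage, mem_Iio, mem_Ioi]
    constructor <;> intro h <;> linarith
  have hsum : gaussianReal μ v (Ioi μ) + gaussianReal μ v (Ioi μ) = 1 := by
    nth_rewrite 1 [← hsymm]
    rw [measure_congr (Ioi_ae_eq_Ici (μ := gaussianReal μ v) (a := μ)),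
      ← measure_union (Iio_disjoint_Ici le_rfl) measurableSet_Ici, Iio_union_Ici, measure_univ]
  rw [← two_mul] at hsum
  exact ENNReal.eq_inv_of_mul_eq_one_left (by rwa [mul_comm])

theorem HasLaw.measure_lt_eq_gaussianReal_Ioi {Ω : Type*} [MeasurableSpace Ω] {P : Measure Ω}
    {Y : Ω → ℝ} {m s : ℝ} (hY : HasLaw Y (gaussianReal m (s ^ 2).toNNReal) P) (hs : 0 < s)
    (a : ℝ) : P {ω | a < Y ω} = gaussianReal 0 1 (Ioi ((a - m) / s)) := by
  have hZ := gaussianReal_div_const (gaussianReal_sub_const hY m) s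
  have hlaw : gaussianReal ((m - m) / s) ((s ^ 2).toNNReal / .mk (s ^ 2) (sq_nonneg s))
      = gaussianReal 0 1 := by
    congr 1
    · simp
    · rw [← NNReal.coe_inj]; simp [Real.coe_toNNReal _ (sq_nonneg s), hs.ne']
  rw [hlaw] at hZ
  have := hZ.measure_eq (p := fun z ↦ (a - m) / s < z) measurableSet_Ioi
  simp only [div_lt_div_iff_of_pos_right hs, sub_lt_sub_iff_right] at this
  exact this

theorem gaussianPDFReal_zero_one (x : ℝ) :
    gaussianPDFReal 0 1 x = (√(2 * π))⁻¹ * exp (-x ^ 2 / 2) := by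
  simp [gaussianPDFReal]

theorem hasDerivAt_neg_gaussianPDFReal_zero_one (x : ℝ) :
    HasDerivAt (fun x ↦ -gaussianPDFReal 0 1 x) (x * gaussianPDFReal 0 1 x) x := by
  have hexp : HasDerivAt (fun x : ℝ ↦ -x ^ 2 / 2) (-x) x :=
    ((hasDerivAt_pow 2 x).neg.div_const 2).congr_deriv (by ring)
  simp only [gaussianPDFReal_zero_one]
  exact (hexp.exp.const_mul _).neg.congr_deriv (by ring)

theorem tendsto_gaussianPDFReal_zero_one_atTop :
    Tendsto (gaussianPDFReal 0 1) atTop (nhds 0) := by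
  simp only [funext gaussianPDFReal_zero_one]
  rw [← mul_zero (√(2 * π))⁻¹]
  refine (tendsto_exp_atBot.comp ?_).const_mul _
  simpa only [Function.comp_def, neg_div] using tendsto_neg_atTop_atBot.comp
    ((tendsto_pow_atTop two_ne_zero).atTop_div_const (two_pos : (0 : ℝ) < 2))

theorem integral_Ioi_mul_gaussianPDFReal_zero_one {s : ℝ} (hs : 0 ≤ s) :
    ∫ x in Ioi s, x * gaussianPDFReal 0 1 x = gaussianPDFReal 0 1 s := by
  rw [integral_Ioi_of_hasDerivAt_of_nonneg
    (hasDerivAt_neg_gaussianPDFReal_zero_one s).continuousAt.continuousWithinAt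
    (fun x _ ↦ hasDerivAt_neg_gaussianPDFReal_zero_one x)
    (fun x hx ↦ mul_nonneg (hs.trans (le_of_lt hx)) (gaussianPDFReal_nonneg 0 1 x))
    (by simpa using tendsto_gaussianPDFReal_zero_one_atTop.neg)]
  ring

theorem gaussianReal_Ioi_le_gaussianPDFReal_div {s : ℝ} (hs : 0 < s) :
    gaussianReal 0 1 (Ioi s) ≤ ENNReal.ofReal (gaussianPDFReal 0 1 s / s) := by
  rw [gaussianReal_apply_eq_integral _ one_ne_zero]
  refine ENNReal.ofReal_le_ofReal ?_
  have hint : IntegrableOn (fun x ↦ x * gaussianPDFReal 0 1 x) (Ioi s) :=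
    integrableOn_Ioi_deriv_of_nonneg
      (hasDerivAt_neg_gaussianPDFReal_zero_one s).continuousAt.continuousWithinAt
      (fun x _ ↦ hasDerivAt_neg_gaussianPDFReal_zero_one x)
      (fun x hx ↦ mul_nonneg (hs.le.trans (le_of_lt hx)) (gaussianPDFReal_nonneg 0 1 x))
      (by simpa using tendsto_gaussianPDFReal_zero_one_atTop.neg)
  calc ∫ x in Ioi s, gaussianPDFReal 0 1 x
      ≤ ∫ x in Ioi s, s⁻¹ * (x * gaussianPDFReal 0 1 x) := by
        refine setIntegral_mono_on (integrable_gaussianPDFReal 0 1).integrableOn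
          (hint.const_mul _) measurableSet_Ioi fun x hx ↦ ?_
        rw [← mul_assoc, inv_mul_eq_div]
        exact le_mul_of_one_le_left (gaussianPDFReal_nonneg 0 1 x)
          ((one_le_div hs).mpr (le_of_lt hx))
    _ = gaussianPDFReal 0 1 s / s := by
        rw [integral_const_mul, integral_Ioi_mul_gaussianPDFReal_zero_one hs.le, inv_mul_eq_div]

theorem gaussianReal_Ioi_le_of_nonpos {s : ℝ} (hs : s ≤ 0) :
    gaussianReal 0 1 (Ioi s) ≤ ENNReal.ofReal (1 / 2 - s / √(2 * π)) :=
  calc gaussianReal 0 1 (Ioi s) = gaussianReal 0 1 (Ioc s 0) + gaussianReal 0 1 (Ioi 0) := by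
        rw [← measure_union (Ioc_disjoint_Ioi le_rfl) measurableSet_Ioi, Ioc_union_Ioi_eq_Ioi hs]
    _ ≤ ENNReal.ofReal (√(2 * π * (1 : ℝ≥0)))⁻¹ * volume (Ioc s 0) + 2⁻¹ :=
        add_le_add (gaussianReal_le_mul_volume 0 one_ne_zero _)
          (gaussianReal_Ioi_self 0 one_ne_zero).le
    _ = ENNReal.ofReal (1 / 2 - s / √(2 * π)) := by
        have half : (2⁻¹ : ℝ≥0∞) = ENNReal.ofReal (1 / 2) := by
          rw [one_div, ENNReal.ofReal_inv_of_pos two_pos, ENNReal.ofReal_ofNat]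
        rw [volume_Ioc, ← ENNReal.ofReal_mul (by positivity), half,
          ← ENNReal.ofReal_add (by positivity) (by positivity)]
        congr 1
        rw [NNReal.coe_one, mul_one]
        ring

theorem gaussianReal_Ioi_sub_one_div_le {δ β : ℝ} (hδ0 : 0 < δ) (hδ1 : δ < 1) (hβ0 : 0 < β)
    (hβ : β ^ 2 = 2 * log (1.25 / δ)) :
    gaussianReal 0 1 (Ioi (β - 1 / (2 * β))) ≤ ENNReal.ofReal δ := by
  -- For `δ ≤ 5/8` the point `β - 1/(2β)` is at least `0.6`, which is enough for the Mills bound;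
  -- for `δ > 5/8` it is at least `-0.2`, and the tail there is below `0.58`.
  have hsqrt : 5 / 2 ≤ √(2 * π) := le_sqrt_of_sq_le (by nlinarith [pi_gt_d2])
  have hexp : exp (-log (1.25 / δ)) = δ / 1.25 := by
    rw [exp_neg, exp_log (by positivity), inv_div]
  rcases le_or_gt δ (5 / 8) with hδ | hδ
  · have hlog : log 2 ≤ log (1.25 / δ) :=
      log_le_log two_pos (by rw [le_div_iff₀ hδ0]; linarith)
    have hβ1 : 1.1 ≤ β := by nlinarith [log_two_gt_d9]
    have hs : 0.6 ≤ β - 1 / (2 * β) := by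
      rw [le_sub_iff_add_le, ← le_sub_iff_add_le', div_le_iff₀ (by positivity)]
      nlinarith
    have hs2 : β ^ 2 - 1 ≤ (β - 1 / (2 * β)) ^ 2 := by
      have : β * (1 / (2 * β)) = 1 / 2 := by field_simp
      nlinarith [sq_nonneg (1 / (2 * β))]
    have hhalf : exp (1 / 2) ≤ 1.65 := by
      have : exp (1 / 2) ^ 2 = exp 1 := by rw [← exp_nat_mul]; norm_num
      nlinarith [exp_one_lt_d9, exp_pos (1 / 2)]
    refine (gaussianReal_Ioi_le_gaussianPDFReal_div (by linarith)).trans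
      (ENNReal.ofReal_le_ofReal ?_)
    rw [gaussianPDFReal_zero_one]
    calc (√(2 * π))⁻¹ * exp (-(β - 1 / (2 * β)) ^ 2 / 2) / (β - 1 / (2 * β))
        ≤ (5 / 2)⁻¹ * exp (1 / 2 + -log (1.25 / δ)) / 0.6 := by
          gcongr
          linarith
      _ ≤ (5 / 2)⁻¹ * (1.65 * (δ / 1.25)) / 0.6 := by
          rw [exp_add, hexp]
          gcongr
      _ ≤ δ := by norm_num; linarith
  · have hlog : 0.2 ≤ log (1.25 / δ) := by
      have := one_sub_inv_le_log_of_pos (x := 1.25 / δ) (by positivity)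
      rw [inv_div] at this
      norm_num at this ⊢
      linarith
    have hβ1 : 0.63 ≤ β := by nlinarith
    have hs : -0.2 ≤ β - 1 / (2 * β) := by
      rw [le_sub_iff_add_le, ← le_sub_iff_add_le', div_le_iff₀ (by positivity)]
      nlinarith
    calc gaussianReal 0 1 (Ioi (β - 1 / (2 * β)))
        ≤ gaussianReal 0 1 (Ioi (-0.2)) := measure_mono (Ioi_subset_Ioi hs)
      _ ≤ ENNReal.ofReal (1 / 2 - -0.2 / √(2 * π)) := gaussianReal_Ioi_le_of_nonpos (by norm_num)
      _ ≤ ENNReal.ofReal δ := by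
        refine ENNReal.ofReal_le_ofReal ?_
        rw [neg_div, sub_neg_eq_add]
        have : 0.2 / √(2 * π) ≤ 0.2 / (5 / 2) := by gcongr
        linarith

noncomputable def gaussianPrivacyLoss (ν₁ ν₂ σ x : ℝ) : ℝ :=
  ((x - ν₂) ^ 2 - (x - ν₁) ^ 2) / (2 * σ ^ 2)

theorem measurable_gaussianPrivacyLoss (ν₁ ν₂ σ : ℝ) :
    Measurable (gaussianPrivacyLoss ν₁ ν₂ σ) := by
  unfold gaussianPrivacyLoss
  fun_prop

theorem gaussianPDFReal_eq_exp_privacyLoss_mul (ν₁ ν₂ σ x : ℝ) :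
    gaussianPDFReal ν₁ (σ ^ 2).toNNReal x
      = exp (gaussianPrivacyLoss ν₁ ν₂ σ x) * gaussianPDFReal ν₂ (σ ^ 2).toNNReal x := by
  simp only [gaussianPDFReal, gaussianPrivacyLoss, Real.coe_toNNReal _ (sq_nonneg σ)]
  rw [mul_left_comm, ← exp_add]
  ring_nf

theorem gaussianReal_restrict_privacyLoss_le {ν₁ ν₂ σ : ℝ} (hσ : σ ≠ 0) (ε : ℝ) :
    (gaussianReal ν₁ (σ ^ 2).toNNReal).restrict {x | gaussianPrivacyLoss ν₁ ν₂ σ x ≤ ε}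
      ≤ ENNReal.ofReal (exp ε) • gaussianReal ν₂ (σ ^ 2).toNNReal := by
  have hv : (σ ^ 2).toNNReal ≠ 0 := by simpa using hσ
  rw [gaussianReal_of_var_ne_zero _ hv, gaussianReal_of_var_ne_zero _ hv]
  refine withDensity_restrict_le_smul_withDensity
    (measurableSet_le (measurable_gaussianPrivacyLoss ν₁ ν₂ σ) measurable_const)
    ENNReal.ofReal_ne_top fun x hx ↦ ?_
  rw [gaussianPDF, gaussianPDF, ← ENNReal.ofReal_mul (exp_nonneg ε),
    gaussianPDFReal_eq_exp_privacyLoss_mul ν₁ ν₂]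
  gcongr
  · exact gaussianPDFReal_nonneg _ _ _
  · exact hx

theorem hasLaw_gaussianPrivacyLoss {ν₁ ν₂ σ : ℝ} (hσ : σ ≠ 0) :
    HasLaw (gaussianPrivacyLoss ν₁ ν₂ σ)
      (gaussianReal ((ν₁ - ν₂) ^ 2 / (2 * σ ^ 2)) (((ν₁ - ν₂) / σ) ^ 2).toNNReal)
      (gaussianReal ν₁ (σ ^ 2).toNNReal) := by
  have h := gaussianReal_add_const (gaussianReal_const_mul
    (gaussianReal_sub_const (HasLaw.id (μ := gaussianReal ν₁ (σ ^ 2).toNNReal)) ν₁)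
    ((ν₁ - ν₂) / σ ^ 2)) ((ν₁ - ν₂) ^ 2 / (2 * σ ^ 2))
  convert h using 2
  · simp only [gaussianPrivacyLoss, id]
    field_simp
    ring
  · simp
  · rw [← NNReal.coe_inj]
    simp only [Real.coe_toNNReal _ (sq_nonneg ((ν₁ - ν₂) / σ)), NNReal.coe_mul, NNReal.coe_mk,
      Real.coe_toNNReal _ (sq_nonneg σ)]
    field_simp

theorem gaussianReal_privacyLoss_gt {ν₁ ν₂ σ : ℝ} (hσ : 0 < σ) (hν : ν₁ ≠ ν₂) (ε : ℝ) :
    gaussianReal ν₁ (σ ^ 2).toNNReal {x | ε < gaussianPrivacyLoss ν₁ ν₂ σ x}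
      = gaussianReal 0 1 (Ioi (ε * σ / |ν₁ - ν₂| - |ν₁ - ν₂| / (2 * σ))) := by
  have hc : 0 < |ν₁ - ν₂| := abs_pos.mpr (sub_ne_zero.mpr hν)
  have hlaw := hasLaw_gaussianPrivacyLoss (ν₁ := ν₁) (ν₂ := ν₂) hσ.ne'
  rw [div_pow, ← sq_abs, ← div_pow] at hlaw
  rw [hlaw.measure_lt_eq_gaussianReal_Ioi (div_pos hc hσ)]
  congr 2
  field_simp

theorem gaussianReal_le_exp_mul_add_of_tail_le {ν₁ ν₂ σ ε δ : ℝ} (hσ : 0 < σ) (hε : 0 ≤ ε)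
    (htail : ν₁ ≠ ν₂ →
      gaussianReal 0 1 (Ioi (ε * σ / |ν₁ - ν₂| - |ν₁ - ν₂| / (2 * σ))) ≤ ENNReal.ofReal δ)
    (S : Set ℝ) :
    gaussianReal ν₁ (σ ^ 2).toNNReal S
      ≤ ENNReal.ofReal (exp ε) * gaussianReal ν₂ (σ ^ 2).toNNReal S + ENNReal.ofReal δ := by
  refine measure_le_mul_add_of_restrict_le
    (measurableSet_le (measurable_gaussianPrivacyLoss ν₁ ν₂ σ) measurable_const)
    (gaussianReal_restrict_privacyLoss_le hσ.ne' ε) ?_ S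
  simp only [compl_ofPred, not_le]
  rcases eq_or_ne ν₁ ν₂ with rfl | hν
  · simp [gaussianPrivacyLoss, hε.not_gt]
  · rw [gaussianReal_privacyLoss_gt hσ hν]
    exact htail hν

theorem sub_one_div_le_mul_div_sub_div {ε σ α β a : ℝ} (hσ : 0 < σ) (hβ : 0 < β) (ha : 0 < a)
    (haα : a ≤ α) (hε : ε ≤ 1) (hαβ : α * β ≤ ε * σ) :
    β - 1 / (2 * β) ≤ ε * σ / a - a / (2 * σ) := by
  have h₁ : β ≤ ε * σ / a := by
    rw [le_div_iff₀ ha]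
    nlinarith
  have h₂ : a / (2 * σ) ≤ 1 / (2 * β) := by
    rw [div_le_div_iff₀ (by positivity) (by positivity)]
    nlinarith
  linarith

theorem gaussianReal_le_exp_mul_add {ε δ α σ ν₁ ν₂ : ℝ} (hε0 : 0 < ε) (hε1 : ε ≤ 1)
    (hδ0 : 0 < δ) (hδ1 : δ < 1) (hα : 0 < α) (hν : |ν₁ - ν₂| ≤ α)
    (hσ : α * √(2 * log (1.25 / δ)) / ε ≤ σ) (S : Set ℝ) :
    gaussianReal ν₁ (σ ^ 2).toNNReal S
      ≤ ENNReal.ofReal (exp ε) * gaussianReal ν₂ (σ ^ 2).toNNReal S + ENNReal.ofReal δ := by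
  have hlog : 0 < log (1.25 / δ) := log_pos (by rw [lt_div_iff₀ hδ0]; linarith)
  set β := √(2 * log (1.25 / δ))
  have hβ0 : 0 < β := sqrt_pos.mpr (by linarith)
  have hσ0 : 0 < σ := lt_of_lt_of_le (by positivity) hσ
  have hαβ : α * β ≤ ε * σ := by rwa [div_le_iff₀ hε0, mul_comm σ] at hσ
  refine gaussianReal_le_exp_mul_add_of_tail_le hσ0 hε0.le (fun hne ↦ ?_) S
  refine (measure_mono (Ioi_subset_Ioi ?_)).trans
    (gaussianReal_Ioi_sub_one_div_le hδ0 hδ1 hβ0 (sq_sqrt (by linarith)))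
  exact sub_one_div_le_mul_div_sub_div hσ0 hβ0 (abs_pos.mpr (sub_ne_zero.mpr hne)) hν hε1 hαβ

end ProbabilityTheory

/-- **One-dimensional Gaussian mechanism.**
If `|μ₁ - μ₂| ≤ α` and `σ ≥ α * √(2 log(1.25/δ)) / ε` with `ε ∈ (0,1]`, `δ ∈ (0,1)`,
`α > 0`, then the Gaussian measures `N(μ₁, σ²)` and `N(μ₂, σ²)` are
`(ε, δ)`-indistinguishable: for every measurable `S ⊆ ℝ`,
`N(μ₁,σ²)(S) ≤ e^ε N(μ₂,σ²)(S) + δ` and `N(μ₂,σ²)(S) ≤ e^ε N(μ₁,σ²)(S) + δ`. -/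
theorem gaussian_mechanism_one_dim (ε δ α σ : ℝ)
    (hε0 : 0 < ε) (hε1 : ε ≤ 1) (hδ0 : 0 < δ) (hδ1 : δ < 1) (hα : 0 < α)
    (μ₁ μ₂ : ℝ) (hμ : |μ₁ - μ₂| ≤ α)
    (hσ : σ ≥ α * Real.sqrt (2 * Real.log (1.25 / δ)) / ε) :
    ∀ S : Set ℝ, MeasurableSet S →
      gaussianReal μ₁ (σ ^ 2).toNNReal S
          ≤ ENNReal.ofReal (Real.exp ε) * gaussianReal μ₂ (σ ^ 2).toNNReal S
            + ENNReal.ofReal δ ∧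
      gaussianReal μ₂ (σ ^ 2).toNNReal S
          ≤ ENNReal.ofReal (Real.exp ε) * gaussianReal μ₁ (σ ^ 2).toNNReal S
            + ENNReal.ofReal δ := fun S _ ↦
  ⟨gaussianReal_le_exp_mul_add hε0 hε1 hδ0 hδ1 hα hμ hσ S,
    gaussianReal_le_exp_mul_add hε0 hε1 hδ0 hδ1 hα (abs_sub_comm μ₁ μ₂ ▸ hμ) hσ S⟩
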